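/- For x⃗, x⃗ᴼ ∈ ℝ³, let ad(x⃗, x⃗ᴼ) denote the linear endomorphism of ℝ³ × ℝ³ given by (u, w) ↦ (−x⃗ × u, −x⃗ᴼ × u − x⃗ × w). Then for all x⃗, x⃗ᴼ, y⃗, y⃗ᴼ ∈ ℝ³, the trace of the composition ad(x⃗, x⃗ᴼ) ∘ ad(y⃗, y⃗ᴼ) equals −4 (x⃗ · y⃗). (This computes the Killing form of the Lie algebra 𝔰𝔢(3) in the motor representation at a point O, showing it is distinct from the screw scalar product.) -/

import Mathlib

set_option autoImplicit false

open Matrix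

/-!
In motor coordinates `ad (x⃗, x⃗ᴼ)` is block lower triangular with both diagonal blocks equal to
`−[x⃗]×`, so the trace of a product of two of them only sees the diagonal and equals
`2 tr ([x⃗]× [y⃗]×)`. By the vector triple product `[x⃗]× [y⃗]× = y⃗ x⃗ᵀ − (x⃗ · y⃗) I`, whose trace is
`x⃗ · y⃗ − 3 (x⃗ · y⃗) = −2 (x⃗ · y⃗)`.
-/

/-- The adjoint endomorphism of `𝔰𝔢(3)` in the motor representation at an
origin `O`: for a screw with motor `(x⃗, x⃗ᴼ)`, it sends the motor `(u, w)`
to `(−x⃗ × u, −x⃗ᴼ × u − x⃗ × w)`. -/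
def adMotor (x xO : Fin 3 → ℝ) :
    ((Fin 3 → ℝ) × (Fin 3 → ℝ)) →ₗ[ℝ] ((Fin 3 → ℝ) × (Fin 3 → ℝ)) where
  toFun p := (-(x ⨯₃ p.1), -(xO ⨯₃ p.1) - x ⨯₃ p.2)
  map_add' p q := by
    simp only [Prod.fst_add, Prod.snd_add, map_add, Prod.mk_add_mk, Prod.mk.injEq]
    constructor <;> abel
  map_smul' c p := by
    simp only [Prod.smul_fst, Prod.smul_snd, _root_.map_smul, RingHom.id_apply,
      Prod.smul_mk, Prod.mk.injEq, smul_sub, smul_neg]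

namespace LinearMap

section BlockLowerTriangular

variable {R M N : Type*} [Semiring R] [AddCommMonoid M] [Module R M] [AddCommMonoid N] [Module R N]

def blockLowerTriangular (f : M →ₗ[R] M) (h : M →ₗ[R] N) (g : N →ₗ[R] N) :
    M × N →ₗ[R] M × N :=
  (f ∘ₗ fst R M N).prod (h ∘ₗ fst R M N + g ∘ₗ snd R M N)

@[simp]
theorem blockLowerTriangular_apply (f : M →ₗ[R] M) (h : M →ₗ[R] N) (g : N →ₗ[R] N) (p : M × N) :
    blockLowerTriangular f h g p = (f p.1, h p.1 + g p.2) :=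
  rfl

theorem blockLowerTriangular_comp_blockLowerTriangular (f f' : M →ₗ[R] M) (h h' : M →ₗ[R] N)
    (g g' : N →ₗ[R] N) :
    blockLowerTriangular f h g ∘ₗ blockLowerTriangular f' h' g' =
      blockLowerTriangular (f ∘ₗ f') (h ∘ₗ f' + g ∘ₗ h') (g ∘ₗ g') := by
  ext p <;> simp

theorem blockLowerTriangular_eq_prodMap_add (f : M →ₗ[R] M) (h : M →ₗ[R] N) (g : N →ₗ[R] N) :
    blockLowerTriangular f h g = prodMap f g + inr R M N ∘ₗ h ∘ₗ fst R M N := by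
  ext p <;> simp [add_comm]

end BlockLowerTriangular

theorem trace_blockLowerTriangular {R M N : Type*} [CommRing R] [AddCommGroup M] [Module R M]
    [AddCommGroup N] [Module R N] [Module.Free R M] [Module.Finite R M] [Module.Free R N]
    [Module.Finite R N] (f : M →ₗ[R] M) (h : M →ₗ[R] N) (g : N →ₗ[R] N) :
    trace R (M × N) (blockLowerTriangular f h g) = trace R M f + trace R N g := by
  have off_diagonal : trace R (M × N) (inr R M N ∘ₗ h ∘ₗ fst R M N) = 0 := by
    rw [trace_comp_comm', comp_assoc, fst_comp_inr, comp_zero, map_zero]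
  rw [blockLowerTriangular_eq_prodMap_add, map_add, trace_prodMap', off_diagonal, add_zero]

theorem crossProduct_comp_crossProduct {R : Type*} [CommRing R] (x y : Fin 3 → R) :
    crossProduct x ∘ₗ crossProduct y =
      (dotProductBilin R R x).smulRight y - (y ⬝ᵥ x) • id := by
  refine LinearMap.ext fun w => ?_
  simp [cross_cross_eq_smul_sub_smul']

theorem trace_crossProduct_comp_crossProduct {R : Type*} [CommRing R] (x y : Fin 3 → R) :
    trace R (Fin 3 → R) (crossProduct x ∘ₗ crossProduct y) = -2 * (x ⬝ᵥ y) := by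
  have trace_id : trace R (Fin 3 → R) id = 3 := by
    rw [trace_eq_matrix_trace R (Pi.basisFun R (Fin 3)), toMatrix_id, Matrix.trace_one,
      Fintype.card_fin, Nat.cast_ofNat]
  rw [crossProduct_comp_crossProduct, map_sub, map_smul, trace_smulRight, trace_id,
    dotProductBilin_apply_apply, dotProduct_comm y, smul_eq_mul]
  ring

end LinearMap

open LinearMap in
theorem adMotor_eq_blockLowerTriangular (x xO : Fin 3 → ℝ) :
    adMotor x xO = blockLowerTriangular (-crossProduct x) (-crossProduct xO) (-crossProduct x) := by
  ext p <;> simp [adMotor, sub_eq_add_neg]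

/-- The Killing form of `𝔰𝔢(3)` in the motor representation:
`trace (ad x ∘ ad y) = −4 (x⃗ · y⃗)`. -/
theorem killing_form_se3 (x xO y yO : Fin 3 → ℝ) :
    LinearMap.trace ℝ ((Fin 3 → ℝ) × (Fin 3 → ℝ))
      (adMotor x xO ∘ₗ adMotor y yO) = -4 * (x ⬝ᵥ y) := by
  rw [adMotor_eq_blockLowerTriangular, adMotor_eq_blockLowerTriangular,
    LinearMap.blockLowerTriangular_comp_blockLowerTriangular, LinearMap.trace_blockLowerTriangular,
    LinearMap.neg_comp, LinearMap.comp_neg, neg_neg,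
    LinearMap.trace_crossProduct_comp_crossProduct]
  ring
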